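/- arXiv:2505.13217 — 4 statements merged into one kernel-verified Lean document; each statement's English description precedes it below -/
import Mathlib

section
/- Let N, m, r be positive integers with m ≤ N, let b ∈ R^N have nonnegative coordinates, and let c ∈ R^r have nonnegative coordinates. Over all r×N integer matrices A with coordinates a_{k,j} satisfying 0 ≤ a_{k,j} ≤ m^{k-1} for all j and Σ_j a_{k,j} ≤ m^k for each k, the function f(A) = Σ_{j=1}^N (b_j + Σ_{k=1}^r c_k a_{k,j})^2 attains its maximum at the matrix with a_{k,j} = m^{k-1} for j ∈ T and a_{k,j} = 0 otherwise, where T is a set of m indices maximizing Σ_{j∈T} b_j. -/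
open scoped BigOperators

/-- Convex constrained optimization of Taylor polynomials: over integer matrices `A` with
`0 ≤ A k j ≤ m^k` (row `k`, zero-indexed, corresponding to `m^{k-1}` in one-indexed form)
and row sums `∑_j A k j ≤ m^{k+1}`, the function
`f(A) = ∑_j (b_j + ∑_k c_k A_{k,j})²` is maximized by the matrix that puts the value
`m^k` in row `k` exactly on the coordinates of a set `T` of `m` indices maximizing
`∑_{j∈T} b_j`, and `0` elsewhere. -/
theorem stmt2 (N m r : ℕ) (hN : 0 < N) (hm : 0 < m) (hr : 0 < r) (hmN : m ≤ N)
    (b : Fin N → ℝ) (hb : ∀ j, 0 ≤ b j) (c : Fin r → ℝ) (hc : ∀ k, 0 ≤ c k)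
    (T : Finset (Fin N)) (hT : T.card = m)
    (hTmax : ∀ T' : Finset (Fin N), T'.card = m → ∑ j ∈ T', b j ≤ ∑ j ∈ T, b j)
    (A : Fin r → Fin N → ℤ)
    (hA1 : ∀ k j, 0 ≤ A k j) (hA2 : ∀ k j, A k j ≤ (m : ℤ) ^ (k : ℕ))
    (hA3 : ∀ k : Fin r, ∑ j, A k j ≤ (m : ℤ) ^ ((k : ℕ) + 1)) :
    ∑ j, (b j + ∑ k, c k * (A k j : ℝ)) ^ 2 ≤
      ∑ j, (b j + ∑ k, c k * (if j ∈ T then ((m : ℝ) ^ (k : ℕ)) else 0)) ^ 2 := by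
  classical
  set s : Fin N → ℝ := fun j => ∑ k, c k * (A k j : ℝ) with hs_def
  set S : ℝ := ∑ k : Fin r, c k * (m : ℝ) ^ (k : ℕ) with hS_def
  set t : Fin N → ℝ := fun j => if j ∈ T then S else 0 with ht_def
  have hs0 : ∀ j, 0 ≤ s j := fun j => Finset.sum_nonneg fun k _ =>
    mul_nonneg (hc k) (by exact_mod_cast hA1 k j)
  have hsS : ∀ j, s j ≤ S := fun j => Finset.sum_le_sum fun k _ =>
    mul_le_mul_of_nonneg_left (by exact_mod_cast hA2 k j) (hc k)
  have hS0 : 0 ≤ S := Finset.sum_nonneg fun k _ => mul_nonneg (hc k) (by positivity)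
  have hsum : ∑ j, s j ≤ (m : ℝ) * S := by
    have : ∑ j, s j = ∑ k, c k * ∑ j, (A k j : ℝ) := by
      simp only [hs_def]
      rw [Finset.sum_comm]
      exact Finset.sum_congr rfl fun k _ => by rw [Finset.mul_sum]
    rw [this, hS_def, Finset.mul_sum]
    apply Finset.sum_le_sum
    intro k _
    have h1 : ∑ j, (A k j : ℝ) ≤ (m : ℝ) ^ ((k : ℕ) + 1) := by
      have := hA3 k
      push_cast at this ⊢
      exact_mod_cast this
    calc c k * ∑ j, (A k j : ℝ) ≤ c k * (m : ℝ) ^ ((k : ℕ) + 1) :=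
          mul_le_mul_of_nonneg_left h1 (hc k)
      _ = (m : ℝ) * (c k * (m : ℝ) ^ (k : ℕ)) := by ring
  have ht_sum : ∑ j, t j = (m : ℝ) * S := by
    simp only [ht_def]
    rw [Finset.sum_ite_mem, Finset.univ_inter, Finset.sum_const, hT, nsmul_eq_mul]
  -- threshold value β
  have hTne : T.Nonempty := Finset.card_pos.mp (by rw [hT]; exact hm)
  obtain ⟨i0, hi0T, hi0min⟩ := T.exists_min_image b hTne
  set β : ℝ := b i0 with hβ_def
  have hβ0 : 0 ≤ β := hb i0
  have hβnT : ∀ j, j ∉ T → b j ≤ β := by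
    intro j hj
    have hjne : j ∉ T.erase i0 := fun h => hj (Finset.mem_of_mem_erase h)
    have hcard : (insert j (T.erase i0)).card = m := by
      rw [Finset.card_insert_of_notMem hjne, Finset.card_erase_of_mem hi0T, hT]
      omega
    have := hTmax _ hcard
    rw [Finset.sum_insert hjne, Finset.sum_erase_eq_sub hi0T] at this
    linarith
  -- Key inequality 1 : linear part
  have key1 : ∑ j, b j * s j ≤ ∑ j, b j * t j := by
    have h1 : ∀ j : Fin N, (b j - β) * s j ≤ (b j - β) * t j := by
      intro j
      by_cases hj : j ∈ T
      · have htj : t j = S := if_pos hj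
        rw [htj]
        exact mul_le_mul_of_nonneg_left (hsS j) (by linarith [hi0min j hj])
      · have htj : t j = 0 := if_neg hj
        rw [htj, mul_zero]
        exact mul_nonpos_of_nonpos_of_nonneg (by linarith [hβnT j hj]) (hs0 j)
    have h2 : β * ∑ j, s j ≤ β * ∑ j, t j := by
      rw [ht_sum]; exact mul_le_mul_of_nonneg_left hsum hβ0
    have e1 : ∑ j, b j * s j = ∑ j, (b j - β) * s j + β * ∑ j, s j := by
      rw [Finset.mul_sum, ← Finset.sum_add_distrib]
      exact Finset.sum_congr rfl fun j _ => by ring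
    have e2 : ∑ j, b j * t j = ∑ j, (b j - β) * t j + β * ∑ j, t j := by
      rw [Finset.mul_sum, ← Finset.sum_add_distrib]
      exact Finset.sum_congr rfl fun j _ => by ring
    rw [e1, e2]
    exact add_le_add (Finset.sum_le_sum fun j _ => h1 j) h2
  -- Key inequality 2 : quadratic part
  have key2 : ∑ j, (s j) ^ 2 ≤ ∑ j, (t j) ^ 2 := by
    have hL : ∑ j, (s j) ^ 2 ≤ S * ∑ j, s j := by
      rw [Finset.mul_sum]
      apply Finset.sum_le_sum
      intro j _
      rw [sq]
      exact mul_le_mul_of_nonneg_right (hsS j) (hs0 j)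
    have hR : ∑ j, (t j) ^ 2 = (m : ℝ) * S ^ 2 := by
      have : ∀ j : Fin N, (t j) ^ 2 = if j ∈ T then S ^ 2 else 0 := by
        intro j; simp only [ht_def]; split <;> simp
      simp only [this]
      rw [Finset.sum_ite_mem, Finset.univ_inter, Finset.sum_const, hT, nsmul_eq_mul]
    have h3 : S * ∑ j, s j ≤ S * ((m : ℝ) * S) := mul_le_mul_of_nonneg_left hsum hS0
    rw [hR]; nlinarith
  -- assemble
  have hconv : ∀ j : Fin N, ∑ k, c k * (if j ∈ T then ((m : ℝ) ^ (k : ℕ)) else 0) = t j := by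
    intro j
    by_cases hj : j ∈ T <;> simp [ht_def, hj, hS_def]
  have expand : ∀ u : Fin N → ℝ,
      ∑ j, (b j + u j) ^ 2 = ∑ j, (b j) ^ 2 + 2 * ∑ j, b j * u j + ∑ j, (u j) ^ 2 := by
    intro u
    rw [Finset.mul_sum, ← Finset.sum_add_distrib, ← Finset.sum_add_distrib]
    exact Finset.sum_congr rfl fun j _ => by ring
  calc ∑ j, (b j + ∑ k, c k * (A k j : ℝ)) ^ 2 = ∑ j, (b j + s j) ^ 2 := rfl
    _ ≤ ∑ j, (b j + t j) ^ 2 := by rw [expand s, expand t]; linarith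
    _ = ∑ j, (b j + ∑ k, c k * (if j ∈ T then ((m : ℝ) ^ (k : ℕ)) else 0)) ^ 2 := by
        exact Finset.sum_congr rfl fun j _ => by rw [hconv j]
end

section
/- Let H = Σ_{α∈S} s_α P_α be an n-qubit traceless Hamiltonian with |S| = m and |s_α| ≤ S, let t > 0, R = (1/m)Σ_{k≥2} (mtS)^k/k!, and let v be the Pauli coefficient vector of e^{-iHt}. Then for any set X of non-identity Pauli matrices with |X| ≥ m: ||v[X]||_2^2 ≤ Σ_{β ∈ S∩X} (|s_β| t + R)^2 + (m − |S∩X|) R^2. -/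
open scoped BigOperators

attribute [local instance] Classical.propDecidable

/-- The four single-qubit Pauli matrices `I, X, Y, Z`. -/
noncomputable def pauliOne : Fin 4 → Matrix (Fin 2) (Fin 2) ℂ
  | 0 => 1
  | 1 => !![0, 1; 1, 0]
  | 2 => !![0, -Complex.I; Complex.I, 0]
  | 3 => !![1, 0; 0, -1]

/-- The `n`-qubit Pauli matrix indexed by `α : Fin n → Fin 4`, given as the
tensor product of the single-qubit Paulis `pauliOne (α i)`. -/
noncomputable def Pauli (n : ℕ) (α : Fin n → Fin 4) :
    Matrix (Fin n → Fin 2) (Fin n → Fin 2) ℂ :=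
  Matrix.of fun x y => ∏ i, pauliOne (α i) (x i) (y i)

/-!
Expand `e^{-iHt} = ∑ₖ (-it)ᵏ Hᵏ / k!`. Multiplying by a Pauli matrix permutes the Pauli labels up to
a phase (qubitwise they multiply by the Klein four-group law), so the `P_β`-coefficient of `Hᵏ` has
modulus at most `Sᵏ |S_{k,β}|`, where `|S_{k,β}|` counts the length-`k` words in the labels of `S`
multiplying to `β`. These counts sum to
`mᵏ` over all `β`, and each is at most `mᵏ⁻¹` because the last letter of a word is determined by
the others. For `β ≠ I` the order-`0` term vanishes and the order-`1` term is `-it s_β`, so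
`|v_β| ≤ a_β + r_β` with `a_β = |s_β| t` on `S`, `0` elsewhere, and a remainder `0 ≤ r_β ≤ R` with
`∑_{β ∈ X} r_β ≤ m R`. Termwise `(a + r)² ≤ (a + R)² - R² + R r` for `0 ≤ r ≤ R`; summing over `X`
gives the bound.
-/

open Finset

instance Pi.instXorOp {ι : Type*} {π : ι → Type*} [∀ i, XorOp (π i)] : XorOp (∀ i, π i) :=
  ⟨fun f g i => f i ^^^ g i⟩

@[simp]
lemma Pi.xor_apply {ι : Type*} {π : ι → Type*} [∀ i, XorOp (π i)] (f g : ∀ i, π i) (i : ι) :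
    (f ^^^ g) i = f i ^^^ g i :=
  rfl

section SingleQubit

/-- With the labels `0, 1, 2, 3 = I, X, Y, Z`, xor is the Klein four-group law of the Paulis
modulo phases; since `pauliOne c * pauliOne c = 1`, this is the scalar `λ` with
`pauliOne a * pauliOne b = λ • pauliOne (a ^^^ b)`. -/
noncomputable def pauliPhase (a b : Fin 4) : ℂ :=
  (pauliOne a * pauliOne b * pauliOne (a ^^^ b)).trace / 2

lemma pauliOne_mul_pauliOne (a b : Fin 4) :
    pauliOne a * pauliOne b = pauliPhase a b • pauliOne (a ^^^ b) := by
  fin_cases a <;> fin_cases b <;>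
    · ext i j
      fin_cases i <;> fin_cases j <;>
        simp [pauliPhase, pauliOne, Matrix.mul_apply, Fin.sum_univ_two, Matrix.trace]

lemma norm_pauliPhase (a b : Fin 4) : ‖pauliPhase a b‖ = 1 := by
  fin_cases a <;> fin_cases b <;> simp [pauliPhase, pauliOne, Fin.sum_univ_two, Matrix.trace]

lemma pauliPhase_self (a : Fin 4) : pauliPhase a a = 1 := by
  fin_cases a <;> simp [pauliPhase, pauliOne, Fin.sum_univ_two, Matrix.trace]

lemma trace_pauliOne (a : Fin 4) : (pauliOne a).trace = if a = 0 then 2 else 0 := by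
  fin_cases a <;> simp [pauliOne, Matrix.trace, Fin.sum_univ_two]

end SingleQubit

section PauliAlgebra

variable {n : ℕ}

namespace Pauli

lemma xor_left_involutive (α : Fin n → Fin 4) : Function.Involutive (α ^^^ ·) :=
  fun β => funext fun i => (by decide : ∀ a b : Fin 4, a ^^^ (a ^^^ b) = b) (α i) (β i)

lemma xor_right_involutive (β : Fin n → Fin 4) : Function.Involutive (· ^^^ β) :=
  fun α => funext fun i => (by decide : ∀ a b : Fin 4, a ^^^ b ^^^ b = a) (α i) (β i)

lemma xor_eq_zero_iff (α β : Fin n → Fin 4) : α ^^^ β = 0 ↔ α = β := by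
  simp only [funext_iff, Pi.xor_apply, Pi.zero_apply]
  exact forall_congr' fun i => (by decide : ∀ a b : Fin 4, a ^^^ b = 0 ↔ a = b) (α i) (β i)

end Pauli

lemma Pauli_mul_Pauli (α β : Fin n → Fin 4) :
    Pauli n α * Pauli n β = (∏ i, pauliPhase (α i) (β i)) • Pauli n (α ^^^ β) := by
  ext x y
  simp only [Matrix.mul_apply, Pauli, Matrix.of_apply, Matrix.smul_apply, smul_eq_mul,
    ← prod_mul_distrib]
  rw [← Fintype.prod_sum fun i w => pauliOne (α i) (x i) w * pauliOne (β i) w (y i)]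
  refine prod_congr rfl fun i _ => ?_
  simpa [Matrix.mul_apply] using congr_fun₂ (pauliOne_mul_pauliOne (α i) (β i)) (x i) (y i)

lemma trace_Pauli (α : Fin n → Fin 4) : (Pauli n α).trace = if α = 0 then 2 ^ n else 0 := by
  have : (Pauli n α).trace = ∏ i, (pauliOne (α i)).trace := by
    simp only [Matrix.trace, Matrix.diag, Pauli, Matrix.of_apply]
    exact (Fintype.prod_sum fun i w => pauliOne (α i) w w).symm
  simp only [this, trace_pauliOne, funext_iff, Pi.zero_apply]
  split_ifs with h
  · simp [h]
  · push Not at h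
    obtain ⟨i, hi⟩ := h
    exact prod_eq_zero (mem_univ i) (if_neg hi)

noncomputable def pauliCoeff (β : Fin n → Fin 4) :
    Matrix (Fin n → Fin 2) (Fin n → Fin 2) ℂ →ₗ[ℂ] ℂ :=
  (2 ^ n : ℂ)⁻¹ • (Matrix.traceLinearMap _ ℂ ℂ ∘ₗ LinearMap.mulRight ℂ (Pauli n β))

lemma pauliCoeff_apply (β : Fin n → Fin 4) (A : Matrix (Fin n → Fin 2) (Fin n → Fin 2) ℂ) :
    pauliCoeff β A = (A * Pauli n β).trace / 2 ^ n := by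
  simp [pauliCoeff, div_eq_inv_mul]

lemma pauliCoeff_one (β : Fin n → Fin 4) : pauliCoeff β 1 = if β = 0 then 1 else 0 := by
  rw [pauliCoeff_apply, one_mul, trace_Pauli]
  split_ifs <;> simp

lemma pauliCoeff_mul_Pauli (A : Matrix (Fin n → Fin 2) (Fin n → Fin 2) ℂ) (α β : Fin n → Fin 4) :
    pauliCoeff β (A * Pauli n α) = (∏ i, pauliPhase (α i) (β i)) * pauliCoeff (α ^^^ β) A := by
  simp only [pauliCoeff_apply, mul_assoc, Pauli_mul_Pauli, Matrix.mul_smul, Matrix.trace_smul,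
    smul_eq_mul, mul_div_assoc]

lemma pauliCoeff_Pauli (α β : Fin n → Fin 4) :
    pauliCoeff β (Pauli n α) = if α = β then 1 else 0 := by
  rw [← one_mul (Pauli n α), pauliCoeff_mul_Pauli, pauliCoeff_one]
  simp only [Pauli.xor_eq_zero_iff]
  split_ifs with h
  · simp [h, pauliPhase_self]
  · exact mul_zero _

lemma pauliCoeff_sum_smul_Pauli (S : Finset (Fin n → Fin 4)) (s : (Fin n → Fin 4) → ℂ)
    (β : Fin n → Fin 4) :
    pauliCoeff β (∑ α ∈ S, s α • Pauli n α) = if β ∈ S then s β else 0 := by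
  simp [pauliCoeff_Pauli]

end PauliAlgebra

section WordCount

variable {n : ℕ} (S : Finset (Fin n → Fin 4))

/-- The number of words `(α₁, …, α_k) ∈ S ^ k` with `α₁ ^^^ ⋯ ^^^ α_k = β`, i.e. the paper's
`|S_{k,β}|`. -/
def wordCount : ℕ → (Fin n → Fin 4) → ℕ
  | 0, β => if β = 0 then 1 else 0
  | k + 1, β => ∑ α ∈ S, wordCount k (α ^^^ β)

lemma sum_wordCount (k : ℕ) : ∑ β, wordCount S k β = #S ^ k := by
  induction k with
  | zero => simp [wordCount]
  | succ k ih =>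
    calc ∑ β, wordCount S (k + 1) β = ∑ α ∈ S, ∑ β, wordCount S k (α ^^^ β) := sum_comm
      _ = ∑ _α ∈ S, #S ^ k := sum_congr rfl fun α _ => by
          rw [← ih]
          exact Equiv.sum_comp ((Pauli.xor_left_involutive α).toPerm _) (wordCount S k)
      _ = #S ^ (k + 1) := by rw [sum_const, smul_eq_mul, pow_succ']

lemma wordCount_succ_le (k : ℕ) (β : Fin n → Fin 4) : wordCount S (k + 1) β ≤ #S ^ k :=
  calc ∑ α ∈ S, wordCount S k (α ^^^ β) ≤ ∑ α, wordCount S k (α ^^^ β) :=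
        sum_le_univ_sum_of_nonneg fun _ => Nat.zero_le _
    _ = #S ^ k := by
        rw [← sum_wordCount S k]
        exact Equiv.sum_comp ((Pauli.xor_right_involutive β).toPerm _) (wordCount S k)

end WordCount

lemma norm_pauliCoeff_pow_le {n : ℕ} {S : Finset (Fin n → Fin 4)} {s : (Fin n → Fin 4) → ℂ}
    {Sbd : ℝ} (hbd : ∀ α ∈ S, ‖s α‖ ≤ Sbd) (k : ℕ) (β : Fin n → Fin 4) :
    ‖pauliCoeff β ((∑ α ∈ S, s α • Pauli n α) ^ k)‖ ≤ Sbd ^ k * wordCount S k β := by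
  induction k generalizing β with
  | zero => by_cases h : β = 0 <;> simp [pauliCoeff_one, wordCount, h]
  | succ k ih =>
    simp only [pow_succ, mul_sum, Matrix.mul_smul, map_sum, map_smul, pauliCoeff_mul_Pauli,
      smul_eq_mul, wordCount, Nat.cast_sum]
    refine (norm_sum_le _ _).trans (sum_le_sum fun α hα => ?_)
    rw [norm_mul, norm_mul, norm_prod]
    simp only [norm_pauliPhase, prod_const_one, one_mul]
    calc ‖s α‖ * ‖pauliCoeff (α ^^^ β) ((∑ α ∈ S, s α • Pauli n α) ^ k)‖
        ≤ Sbd * (Sbd ^ k * wordCount S k (α ^^^ β)) :=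
          mul_le_mul (hbd α hα) (ih _) (norm_nonneg _) ((norm_nonneg _).trans (hbd α hα))
      _ = Sbd ^ (k + 1) * wordCount S k (α ^^^ β) := by ring

lemma summable_pow_add_two_div_factorial (y : ℝ) :
    Summable fun j : ℕ => y ^ (j + 2) / (j + 2).factorial :=
  (summable_nat_add_iff 2).2 (Real.summable_pow_div_factorial y)

section WordTail

variable {n : ℕ} (S : Finset (Fin n → Fin 4))

/-- With `x = t S` this majorizes the part of order `≥ 2` of the Pauli coefficient of `e^{-iHt}`
at `β`. -/
noncomputable def wordTail (x : ℝ) (β : Fin n → Fin 4) : ℝ :=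
  ∑' j : ℕ, x ^ (j + 2) * wordCount S (j + 2) β / (j + 2).factorial

variable {S} {x : ℝ}

lemma wordTail_term_le (hx : 0 ≤ x) (j : ℕ) (β : Fin n → Fin 4) :
    x ^ (j + 2) * wordCount S (j + 2) β / (j + 2).factorial
      ≤ 1 / #S * ((#S * x) ^ (j + 2) / (j + 2).factorial) := by
  have hcount : (wordCount S (j + 2) β : ℝ) ≤ (#S : ℝ) ^ (j + 1) := by
    exact_mod_cast wordCount_succ_le S (j + 1) β
  calc x ^ (j + 2) * wordCount S (j + 2) β / (j + 2).factorial
      ≤ x ^ (j + 2) * (#S : ℝ) ^ (j + 1) / (j + 2).factorial := by gcongr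
    _ = 1 / #S * ((#S * x) ^ (j + 2) / (j + 2).factorial) := by
      rcases eq_or_ne (#S : ℝ) 0 with h | h
      · simp [h]
      · field_simp
        ring

lemma summable_wordTail_term (hx : 0 ≤ x) (β : Fin n → Fin 4) :
    Summable fun j : ℕ => x ^ (j + 2) * wordCount S (j + 2) β / (j + 2).factorial :=
  .of_nonneg_of_le (fun _ => by positivity) (wordTail_term_le hx · β)
    ((summable_pow_add_two_div_factorial _).mul_left _)

lemma wordTail_le (hx : 0 ≤ x) (β : Fin n → Fin 4) :
    wordTail S x β ≤ 1 / #S * ∑' j : ℕ, (#S * x) ^ (j + 2) / (j + 2).factorial := by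
  rw [← tsum_mul_left]
  exact (summable_wordTail_term hx β).tsum_le_tsum (wordTail_term_le hx · β)
    ((summable_pow_add_two_div_factorial _).mul_left _)

lemma sum_wordTail_le (hx : 0 ≤ x) (X : Finset (Fin n → Fin 4)) :
    ∑ β ∈ X, wordTail S x β ≤ ∑' j : ℕ, (#S * x) ^ (j + 2) / (j + 2).factorial := by
  unfold wordTail
  rw [← Summable.tsum_finsetSum fun β _ => summable_wordTail_term hx β]
  refine (summable_sum fun β _ => summable_wordTail_term hx β).tsum_le_tsum (fun j => ?_)
    (summable_pow_add_two_div_factorial _)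
  have hcount : ∑ β ∈ X, (wordCount S (j + 2) β : ℝ) ≤ (#S : ℝ) ^ (j + 2) := by
    exact_mod_cast (sum_le_univ_sum_of_nonneg fun _ => Nat.zero_le _).trans
      (sum_wordCount S (j + 2)).le
  calc ∑ β ∈ X, x ^ (j + 2) * wordCount S (j + 2) β / (j + 2).factorial
      = x ^ (j + 2) * (∑ β ∈ X, (wordCount S (j + 2) β : ℝ)) / (j + 2).factorial := by
        rw [mul_sum, sum_div]
    _ ≤ x ^ (j + 2) * (#S : ℝ) ^ (j + 2) / (j + 2).factorial := by gcongr
    _ = (#S * x) ^ (j + 2) / (j + 2).factorial := by ring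

end WordTail

lemma Matrix.hasSum_map_exp {N E : Type*} [Fintype N] [DecidableEq N] [NormedAddCommGroup E]
    [NormedSpace ℂ E] (L : Matrix N N ℂ →ₗ[ℂ] E) (A : Matrix N N ℂ) :
    HasSum (fun k : ℕ => (k.factorial : ℂ)⁻¹ • L (A ^ k)) (L (NormedSpace.exp A)) := by
  -- any algebra norm will do: `NormedSpace.exp` only depends on the topology
  let _ : NormedRing (Matrix N N ℂ) := Matrix.linftyOpNormedRing
  let _ : NormedAlgebra ℂ (Matrix N N ℂ) := Matrix.linftyOpNormedAlgebra
  have h := (NormedSpace.exp_series_hasSum_exp' (𝕂 := ℂ) A).mapL L.toContinuousLinearMap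
  simp only [LinearMap.coe_toContinuousLinearMap', map_smul] at h
  exact h

lemma norm_le_norm_add_tsum_of_hasSum {E : Type*} [SeminormedAddCommGroup E] {g : ℕ → E} {x : E}
    {b : ℕ → ℝ} (hg : HasSum g x) (hg0 : g 0 = 0) (hb : Summable b)
    (hgb : ∀ j, ‖g (j + 2)‖ ≤ b j) :
    ‖x‖ ≤ ‖g 1‖ + ∑' j, b j := by
  have htail : ‖x - ∑ i ∈ range 2, g i‖ ≤ ∑' j, b j :=
    ((hasSum_nat_add_iff' 2).2 hg).norm_le_of_bounded hb.hasSum hgb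
  have hx : x = g 1 + (x - ∑ i ∈ range 2, g i) := by simp [sum_range_succ, hg0]
  rw [hx]
  exact (norm_add_le _ _).trans (add_le_add_right htail _)

lemma norm_pauliCoeff_exp_le {n : ℕ} {S : Finset (Fin n → Fin 4)} {s : (Fin n → Fin 4) → ℂ}
    {Sbd t : ℝ} (hbd : ∀ α ∈ S, ‖s α‖ ≤ Sbd) (hSbd : 0 ≤ Sbd) (ht : 0 ≤ t)
    {β : Fin n → Fin 4} (hβ : β ≠ 0) :
    ‖pauliCoeff β (NormedSpace.exp ((-(Complex.I * t)) • ∑ α ∈ S, s α • Pauli n α))‖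
      ≤ (if β ∈ S then ‖s β‖ * t else 0) + wordTail S (t * Sbd) β := by
  set H := ∑ α ∈ S, s α • Pauli n α
  have hz : ‖-(Complex.I * t)‖ = t := by simp [abs_of_nonneg ht]
  have hterm (k : ℕ) : ‖(k.factorial : ℂ)⁻¹ • pauliCoeff β ((-(Complex.I * t) • H) ^ k)‖
      = t ^ k / k.factorial * ‖pauliCoeff β (H ^ k)‖ := by
    rw [smul_pow, map_smul, norm_smul, norm_smul, norm_pow, hz, norm_inv, Complex.norm_natCast,
      div_eq_inv_mul, mul_assoc]
  refine (norm_le_norm_add_tsum_of_hasSum (Matrix.hasSum_map_exp (pauliCoeff β) _) ?_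
    (summable_wordTail_term (S := S) (mul_nonneg ht hSbd) β) fun j => ?_).trans_eq ?_
  · simp [pauliCoeff_one, hβ]
  · rw [hterm]
    calc t ^ (j + 2) / (j + 2).factorial * ‖pauliCoeff β (H ^ (j + 2))‖
        ≤ t ^ (j + 2) / (j + 2).factorial * (Sbd ^ (j + 2) * wordCount S (j + 2) β) := by
          gcongr
          exact norm_pauliCoeff_pow_le hbd _ β
      _ = (t * Sbd) ^ (j + 2) * wordCount S (j + 2) β / (j + 2).factorial := by ring
  · rw [hterm, pow_one, pow_one, pauliCoeff_sum_smul_Pauli]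
    split_ifs <;> simp [mul_comm, wordTail]

lemma sum_sq_le_of_tail_le {ι : Type*} [DecidableEq ι] (X S : Finset ι) (a r : ι → ℝ) {R m : ℝ}
    (ha : ∀ β ∈ S, 0 ≤ a β) (hr : ∀ β ∈ X, 0 ≤ r β ∧ r β ≤ R) (hR : 0 ≤ R)
    (hsum : ∑ β ∈ X, r β ≤ m * R) :
    ∑ β ∈ X, ((if β ∈ S then a β else 0) + r β) ^ 2
      ≤ ∑ β ∈ S ∩ X, (a β + R) ^ 2 + (m - #(S ∩ X)) * R ^ 2 := by
  calc ∑ β ∈ X, ((if β ∈ S then a β else 0) + r β) ^ 2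
      ≤ ∑ β ∈ X, ((if β ∈ S then (a β + R) ^ 2 - R ^ 2 else 0) + R * r β) := by
        refine sum_le_sum fun β hβ => ?_
        obtain ⟨hr0, hrR⟩ := hr β hβ
        split_ifs with hβS
        · nlinarith [ha β hβS]
        · nlinarith
    _ = ∑ β ∈ S ∩ X, (a β + R) ^ 2 - #(S ∩ X) * R ^ 2 + R * ∑ β ∈ X, r β := by
        rw [sum_add_distrib, sum_ite_mem, inter_comm, sum_sub_distrib, sum_const, nsmul_eq_mul,
          mul_sum]
    _ ≤ ∑ β ∈ S ∩ X, (a β + R) ^ 2 + (m - #(S ∩ X)) * R ^ 2 := by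
        nlinarith [mul_le_mul_of_nonneg_left hsum hR]

theorem stmt17_general (n m : ℕ) (S : Finset (Fin n → Fin 4)) (hScard : S.card = m)
    (s : (Fin n → Fin 4) → ℂ) (Sbd : ℝ) (hbd : ∀ α ∈ S, ‖s α‖ ≤ Sbd)
    (t : ℝ) (ht : 0 < t)
    (H : Matrix (Fin n → Fin 2) (Fin n → Fin 2) ℂ)
    (hH : H = ∑ α ∈ S, s α • Pauli n α)
    (R : ℝ)
    (hR : R = (1 / m) * ∑' k : ℕ, (m * t * Sbd) ^ (k + 2) / (k + 2).factorial)
    (v : (Fin n → Fin 4) → ℂ)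
    (hv : ∀ α, v α =
      (NormedSpace.exp ((-(Complex.I * (t : ℂ))) • H) * Pauli n α).trace / 2 ^ n)
    (X : Finset (Fin n → Fin 4)) (hXid : (fun _ => (0 : Fin 4)) ∉ X) :
    ∑ α ∈ X, Complex.normSq (v α)
      ≤ (∑ α ∈ S ∩ X, (‖s α‖ * t + R) ^ 2)
        + ((m : ℝ) - (S ∩ X).card) * R ^ 2 := by
  subst hScard hH
  simp only [← pauliCoeff_apply] at hv
  have hX0 : ∀ β ∈ X, β ≠ 0 := fun β hβ h => hXid (by rwa [h] at hβ)
  obtain rfl | ⟨α₀, hα₀⟩ := S.eq_empty_or_nonempty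
  · rw [sum_eq_zero fun β hβ => by simp [hv, pauliCoeff_one, hX0 β hβ]]
    simp
  have hSbd : 0 ≤ Sbd := (norm_nonneg _).trans (hbd α₀ hα₀)
  have hx : 0 ≤ t * Sbd := by positivity
  set T := ∑' k : ℕ, (#S * (t * Sbd)) ^ (k + 2) / (k + 2).factorial
  have hRT : R = 1 / #S * T := by simp only [hR, T, mul_assoc]
  calc ∑ α ∈ X, Complex.normSq (v α)
      ≤ ∑ β ∈ X, ((if β ∈ S then ‖s β‖ * t else 0) + wordTail S (t * Sbd) β) ^ 2 := by
        gcongr with β hβ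
        rw [Complex.normSq_eq_norm_sq, hv]
        gcongr
        exact norm_pauliCoeff_exp_le hbd hSbd ht.le (hX0 β hβ)
    _ ≤ _ := by
        refine sum_sq_le_of_tail_le X S _ _ (fun β _ => by positivity)
          (fun β _ => ⟨tsum_nonneg fun j => by positivity, hRT ▸ wordTail_le hx β⟩)
          (hRT ▸ by positivity) ?_
        rw [hRT, ← mul_assoc, mul_one_div_cancel (Nat.cast_ne_zero.2 (card_ne_zero_of_mem hα₀))]
        simpa using sum_wordTail_le hx X

/-- ℓ₂-norm upper bound for the Pauli coefficient vector of the evolution operator: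
for a traceless `H = ∑_{α∈S} s_α P_α` with `m = |S|` nonzero Pauli terms, `|s_α| ≤ S`,
`t > 0`, `R = (1/m) ∑_{k≥2} (mtS)^k/k!`, and `v` the Pauli coefficient vector of
`e^{-iHt}`, for any set `X` of non-identity Pauli matrices with `|X| ≥ m` one has
`‖v[X]‖₂² ≤ ∑_{β ∈ S∩X} (|s_β| t + R)² + (m − |S∩X|) R²`. -/
theorem stmt17 (n m : ℕ) (S : Finset (Fin n → Fin 4)) (hScard : S.card = m)
    (hSid : (fun _ => (0 : Fin 4)) ∉ S)
    (s : (Fin n → Fin 4) → ℂ) (Sbd : ℝ) (hbd : ∀ α ∈ S, ‖s α‖ ≤ Sbd)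
    (t : ℝ) (ht : 0 < t)
    (H : Matrix (Fin n → Fin 2) (Fin n → Fin 2) ℂ)
    (hH : H = ∑ α ∈ S, s α • Pauli n α)
    (R : ℝ)
    (hR : R = (1 / m) * ∑' k : ℕ, (m * t * Sbd) ^ (k + 2) / (k + 2).factorial)
    (v : (Fin n → Fin 4) → ℂ)
    (hv : ∀ α, v α =
      (NormedSpace.exp ((-(Complex.I * (t : ℂ))) • H) * Pauli n α).trace / 2 ^ n)
    (X : Finset (Fin n → Fin 4)) (hXid : (fun _ => (0 : Fin 4)) ∉ X)
    (hX : m ≤ X.card) :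
    ∑ α ∈ X, Complex.normSq (v α)
      ≤ (∑ α ∈ S ∩ X, (‖s α‖ * t + R) ^ 2)
        + ((m : ℝ) - (S ∩ X).card) * R ^ 2 :=
  stmt17_general n m S hScard s Sbd hbd t ht H hH R hR v hv X hXid
end

section
/- Let H_1 and H_2 be n-qubit Hermitian matrices, and consider any interactive protocol that makes D queries to the controlled time evolution ctrl(e^{-iHt_d}) (for arbitrary times t_1,...,t_D and arbitrary interleaved unitaries on an extended system), followed by a POVM measurement. If p_1 and p_2 denote the output distributions when H = H_1 and H = H_2 respectively, then TV(p_1, p_2) ≤ min(2·||H_1 − H_2||·Σ_d |t_d|, 1). -/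
open scoped BigOperators Matrix ComplexOrder

/-- The controlled time evolution `ctrl(e^{-iHt}) ⊗ I` on a system consisting of one
control qubit, `n` system qubits, and an arbitrary finite ancilla `A`. -/
noncomputable def ctrlEvolExt (n : ℕ) (H : Matrix (Fin n → Fin 2) (Fin n → Fin 2) ℂ)
    (t : ℝ) (A : Type*) [Fintype A] [DecidableEq A] :
    Matrix (Fin 2 × (Fin n → Fin 2) × A) (Fin 2 × (Fin n → Fin 2) × A) ℂ :=
  Matrix.of fun p q =>
    if p.1 = q.1 ∧ p.2.2 = q.2.2 then
      (if p.1 = 0 then (if p.2.1 = q.2.1 then 1 else 0)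
       else NormedSpace.exp ((-(Complex.I * (t : ℂ))) • H) p.2.1 q.2.1)
    else 0

/-- The overall unitary `U_{D+1}(ctrl(e^{-iHt_D})⊗I)U_D ⋯ U_2(ctrl(e^{-iHt_1})⊗I)U_1`
of a single-round experiment. -/
noncomputable def runCircuit (n : ℕ) (H : Matrix (Fin n → Fin 2) (Fin n → Fin 2) ℂ)
    {A : Type*} [Fintype A] [DecidableEq A] (D : ℕ) (t : Fin D → ℝ)
    (U : Fin (D + 1) → Matrix (Fin 2 × (Fin n → Fin 2) × A)
      (Fin 2 × (Fin n → Fin 2) × A) ℂ) :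
    Matrix (Fin 2 × (Fin n → Fin 2) × A) (Fin 2 × (Fin n → Fin 2) × A) ℂ :=
  U (Fin.last D) *
    ((List.ofFn fun i : Fin D => ctrlEvolExt n H (t i) A * U i.castSucc).reverse).prod

/-!
Each query `ctrl(e^{-iHt}) ⊗ I` is the image of the pair `(1, e^{-iHt})` under a star-algebra
homomorphism into the big matrix algebra, and star homomorphisms of C⋆-algebras are contractive, so the two queries differ in operator norm by at most `‖e^{-iH₁t} - e^{-iH₂t}‖`,
which is at most `‖H₁ - H₂‖ |t|` by the mean value theorem applied to `s ↦ e^{sa} e^{(1-s)b}`.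
Since all factors are unitary, the differences of the `D` queries add up along the circuit.
Finally, writing the POVM elements as `Bₒᴴ Bₒ`, the outcome probabilities are `‖Bₒ ψ‖²`, and
Cauchy–Schwarz turns `∑ₒ |‖Bₒ ψ₁‖² - ‖Bₒ ψ₂‖²|` into at most `2 ‖ψ₁ - ψ₂‖`.
-/

open NormedSpace

/-- Mathlib's version assumes a normed `ℚ`-algebra, which a C⋆-algebra is only by restriction
of scalars. -/
theorem CStarAlgebra.exp_mem_unitary_of_mem_skewAdjoint {E : Type*} [CStarAlgebra E] {a : E}
    (ha : a ∈ skewAdjoint E) : exp a ∈ unitary E :=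
  let _ : NormedAlgebra ℚ E := .restrictScalars ℚ ℂ E
  NormedSpace.exp_mem_unitary_of_mem_skewAdjoint ha

theorem norm_exp_sub_exp_le_of_mem_skewAdjoint {E : Type*} [CStarAlgebra E] {a b : E}
    (ha : a ∈ skewAdjoint E) (hb : b ∈ skewAdjoint E) : ‖exp a - exp b‖ ≤ ‖a - b‖ := by
  have hunit {c : E} (hc : c ∈ skewAdjoint E) (s : ℝ) : exp (s • c) ∈ unitary E :=
    CStarAlgebra.exp_mem_unitary_of_mem_skewAdjoint (skewAdjoint.smul_mem s hc)
  let f : ℝ → E := fun s => exp (s • a) * exp ((1 - s) • b)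
  have hf (s : ℝ) : HasDerivAt f (exp (s • a) * ((a - b) * exp ((1 - s) • b))) s := by
    have hb' : HasDerivAt (fun u : ℝ => exp ((1 - u) • b)) (-(exp ((1 - s) • b) * b)) s :=
      ((hasDerivAt_exp_smul_const b (1 - s)).scomp s ((hasDerivAt_id s).const_sub 1)).congr_deriv
        (by simp)
    refine ((hasDerivAt_exp_smul_const a s).mul hb').congr_deriv ?_
    rw [((Commute.refl b).smul_left (1 - s)).exp_left.eq]
    noncomm_ring
  have hf' (s : ℝ) : ‖exp (s • a) * ((a - b) * exp ((1 - s) • b))‖ = ‖a - b‖ := by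
    rw [CStarRing.norm_mem_unitary_mul _ (hunit ha s),
      CStarRing.norm_mul_mem_unitary _ (hunit hb (1 - s))]
  simpa [f] using norm_image_sub_le_of_norm_deriv_le_segment_01' (f := f)
    (fun s _ => (hf s).hasDerivWithinAt) (fun s _ => (hf' s).le)

theorem IsSelfAdjoint.neg_I_mul_smul_mem_skewAdjoint {E : Type*} [AddCommGroup E] [Module ℂ E]
    [StarAddMonoid E] [StarModule ℂ E] {H : E} (hH : IsSelfAdjoint H) (τ : ℝ) :
    (-(Complex.I * τ)) • H ∈ skewAdjoint E :=
  hH.smul_mem_skewAdjoint (by simp [skewAdjoint.mem_iff])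

theorem norm_list_prod_map_sub_le_of_mem_unitary {E ι : Type*} [NormedRing E] [StarRing E]
    [CStarRing E] {f g : ι → E} (hf : ∀ i, f i ∈ unitary E) (hg : ∀ i, g i ∈ unitary E)
    (l : List ι) : ‖(l.map f).prod - (l.map g).prod‖ ≤ (l.map fun i => ‖f i - g i‖).sum := by
  induction l with
  | nil => simp
  | cons i l ih =>
    have hl : (l.map g).prod ∈ unitary E := list_prod_mem (by simpa using fun j _ => hg j)
    calc ‖((i :: l).map f).prod - ((i :: l).map g).prod‖
        = ‖f i * ((l.map f).prod - (l.map g).prod) + (f i - g i) * (l.map g).prod‖ := by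
          simp only [List.map_cons, List.prod_cons]; noncomm_ring
      _ ≤ ‖(l.map f).prod - (l.map g).prod‖ + ‖f i - g i‖ := by
          refine (norm_add_le _ _).trans_eq ?_
          rw [CStarRing.norm_mem_unitary_mul _ (hf i), CStarRing.norm_mul_mem_unitary _ hl]
      _ ≤ ((i :: l).map fun i => ‖f i - g i‖).sum := by
          rw [List.map_cons, List.sum_cons]; linarith

theorem sum_abs_sq_norm_sub_sq_norm_le {E F G O : Type*} [SeminormedAddCommGroup E]
    [SeminormedAddCommGroup F] [FunLike G E F] [AddMonoidHomClass G E F] [Fintype O]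
    (K : O → G) (hK : ∀ x, ∑ o, ‖K o x‖ ^ 2 = ‖x‖ ^ 2) (x y : E) :
    ∑ o, |‖K o x‖ ^ 2 - ‖K o y‖ ^ 2| ≤ ‖x - y‖ * (‖x‖ + ‖y‖) := by
  have hpt (o : O) : |‖K o x‖ ^ 2 - ‖K o y‖ ^ 2| ≤
      ‖K o (x - y)‖ * ‖K o x‖ + ‖K o (x - y)‖ * ‖K o y‖ := by
    rw [sq_sub_sq, abs_mul, abs_of_nonneg (by positivity), map_sub, mul_comm, ← mul_add]
    exact mul_le_mul_of_nonneg_right (abs_norm_sub_norm_le _ _) (by positivity)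
  have hcs (z : E) : ∑ o, ‖K o (x - y)‖ * ‖K o z‖ ≤ ‖x - y‖ * ‖z‖ := by
    refine (Real.sum_mul_le_sqrt_mul_sqrt _ _ _).trans_eq ?_
    rw [hK, hK, Real.sqrt_sq (norm_nonneg _), Real.sqrt_sq (norm_nonneg _)]
  calc ∑ o, |‖K o x‖ ^ 2 - ‖K o y‖ ^ 2|
      ≤ ∑ o, (‖K o (x - y)‖ * ‖K o x‖ + ‖K o (x - y)‖ * ‖K o y‖) :=
        Finset.sum_le_sum fun o _ => hpt o
    _ ≤ ‖x - y‖ * ‖x‖ + ‖x - y‖ * ‖y‖ := by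
        rw [Finset.sum_add_distrib]; exact add_le_add (hcs x) (hcs y)
    _ = ‖x - y‖ * (‖x‖ + ‖y‖) := by ring

def Equiv.prodLeftComm (α β γ : Type*) : α × β × γ ≃ β × α × γ :=
  (Equiv.prodAssoc α β γ).symm.trans <|
    ((Equiv.prodComm α β).prodCongr (Equiv.refl γ)).trans (Equiv.prodAssoc β α γ)

namespace Matrix

section Controlled

variable (C S A : Type*) [Fintype C] [DecidableEq C] [Fintype S] [DecidableEq S]
  [Fintype A] [DecidableEq A]

/-- `F ↦ ∑ c, |c⟩⟨c| ⊗ F c ⊗ 1_A`, realised as a reindexed block-diagonal matrix. -/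
noncomputable def controlled : (C → Matrix S S ℂ) →⋆ₐ[ℂ] Matrix (C × S × A) (C × S × A) ℂ where
  toFun F := (blockDiagonal fun ca : C × A => F ca.1).submatrix (Equiv.prodLeftComm C S A)
    (Equiv.prodLeftComm C S A)
  map_one' := by simp [← Pi.one_def]
  map_mul' F G := by simp [blockDiagonal_mul]
  map_zero' := by simp [← Pi.zero_def]
  map_add' F G := congrArg (submatrix · _ _) (blockDiagonal_add (fun ca : C × A => F ca.1) _)
  commutes' c := by
    ext p q
    simp [algebraMap_eq_diagonal, diagonal_apply]
  map_star' F := by simp [star_eq_conjTranspose, blockDiagonal_conjTranspose]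

variable {C S A}

lemma controlled_apply (F : C → Matrix S S ℂ) (p q : C × S × A) :
    controlled C S A F p q = if p.1 = q.1 ∧ p.2.2 = q.2.2 then F p.1 p.2.1 q.2.1 else 0 := by
  simp [controlled, Equiv.prodLeftComm, blockDiagonal_apply]

end Controlled

section POVM

variable {κ O : Type*} [Fintype κ] [Fintype O]

lemma re_star_dotProduct_self (u : κ → ℂ) : (star u ⬝ᵥ u).re = ‖WithLp.toLp 2 u‖ ^ 2 := by
  rw [@norm_sq_eq_re_inner ℂ, EuclideanSpace.inner_toLp_toLp, dotProduct_comm]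
  rfl

lemma re_star_dotProduct_conjTranspose_mul_mulVec (B : Matrix κ κ ℂ) (u : κ → ℂ) :
    (star u ⬝ᵥ (Bᴴ * B) *ᵥ u).re = ‖WithLp.toLp 2 (B *ᵥ u)‖ ^ 2 := by
  rw [← mulVec_mulVec, dotProduct_mulVec, ← star_mulVec, re_star_dotProduct_self]

variable [DecidableEq κ] {M : O → Matrix κ κ ℂ}

lemma sum_re_star_dotProduct_mulVec (hM : ∑ o, M o = 1) (u : κ → ℂ) :
    ∑ o, (star u ⬝ᵥ M o *ᵥ u).re = ‖WithLp.toLp 2 u‖ ^ 2 := by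
  rw [← Complex.re_sum, ← dotProduct_sum, ← sum_mulVec, hM, one_mulVec, re_star_dotProduct_self]

theorem sum_abs_re_star_dotProduct_mulVec_sub_le (hM : ∀ o, (M o).PosSemidef)
    (hM₁ : ∑ o, M o = 1) (u v : κ → ℂ) :
    ∑ o, |(star u ⬝ᵥ M o *ᵥ u).re - (star v ⬝ᵥ M o *ᵥ v).re| ≤
      ‖WithLp.toLp 2 (u - v)‖ * (‖WithLp.toLp 2 u‖ + ‖WithLp.toLp 2 v‖) := by
  open scoped MatrixOrder in
  choose B hB using fun o => CStarAlgebra.nonneg_iff_eq_star_mul_self.mp (hM o).nonneg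
  have hB' (o : O) (w : κ → ℂ) :
      (star w ⬝ᵥ M o *ᵥ w).re = ‖toEuclideanCLM (𝕜 := ℂ) (B o) (WithLp.toLp 2 w)‖ ^ 2 := by
    rw [hB o, star_eq_conjTranspose, re_star_dotProduct_conjTranspose_mul_mulVec,
      toEuclideanCLM_toLp]
  simp only [hB']
  refine sum_abs_sq_norm_sub_sq_norm_le (fun o => toEuclideanCLM (𝕜 := ℂ) (B o)) (fun x => ?_) _ _
  obtain ⟨w, rfl⟩ := WithLp.toLp_surjective 2 x
  simp only [← hB']
  exact sum_re_star_dotProduct_mulVec hM₁ w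

theorem sum_abs_re_star_dotProduct_mulVec_sub_le_add (hM : ∀ o, (M o).PosSemidef)
    (hM₁ : ∑ o, M o = 1) (u v : κ → ℂ) :
    ∑ o, |(star u ⬝ᵥ M o *ᵥ u).re - (star v ⬝ᵥ M o *ᵥ v).re| ≤
      ‖WithLp.toLp 2 u‖ ^ 2 + ‖WithLp.toLp 2 v‖ ^ 2 := by
  have hp (w : κ → ℂ) (o : O) : 0 ≤ (star w ⬝ᵥ M o *ᵥ w).re :=
    (Complex.nonneg_iff.mp ((hM o).dotProduct_mulVec_nonneg w)).1
  rw [← sum_re_star_dotProduct_mulVec hM₁ u, ← sum_re_star_dotProduct_mulVec hM₁ v,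
    ← Finset.sum_add_distrib]
  exact Finset.sum_le_sum fun o _ =>
    (abs_sub _ _).trans_eq (by rw [abs_of_nonneg (hp u o), abs_of_nonneg (hp v o)])

end POVM

end Matrix

section Circuit

open scoped Matrix.Norms.L2Operator

variable {n : ℕ} {A : Type*} [Fintype A] [DecidableEq A]

lemma ctrlEvolExt_eq_controlled (H : Matrix (Fin n → Fin 2) (Fin n → Fin 2) ℂ) (τ : ℝ) :
    ctrlEvolExt n H τ A = Matrix.controlled (Fin 2) _ A ![1, exp ((-(Complex.I * τ)) • H)] := by
  ext ⟨c, s, a⟩ ⟨c', s', a'⟩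
  rw [Matrix.controlled_apply]
  fin_cases c <;> simp [ctrlEvolExt, Matrix.one_apply]

lemma ctrlEvolExt_mem_unitaryGroup {H : Matrix (Fin n → Fin 2) (Fin n → Fin 2) ℂ}
    (hH : H.IsHermitian) (τ : ℝ) : ctrlEvolExt n H τ A ∈ Matrix.unitaryGroup _ ℂ := by
  have hu := CStarAlgebra.exp_mem_unitary_of_mem_skewAdjoint
    (hH.isSelfAdjoint.neg_I_mul_smul_mem_skewAdjoint τ)
  rw [ctrlEvolExt_eq_controlled]
  refine Unitary.map_mem _ (Unitary.mem_iff.mpr ⟨?_, ?_⟩) <;> ext1 c <;> fin_cases c <;>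
    simp only [Fin.zero_eta, Fin.mk_one, Pi.mul_apply, Pi.star_apply, Pi.one_apply,
      Matrix.cons_val_zero, Matrix.cons_val_one, star_one, mul_one,
      Unitary.star_mul_self_of_mem hu, Unitary.mul_star_self_of_mem hu]

lemma norm_ctrlEvolExt_sub_le {H₁ H₂ : Matrix (Fin n → Fin 2) (Fin n → Fin 2) ℂ}
    (hH₁ : H₁.IsHermitian) (hH₂ : H₂.IsHermitian) (τ : ℝ) :
    ‖ctrlEvolExt n H₁ τ A - ctrlEvolExt n H₂ τ A‖ ≤ ‖H₁ - H₂‖ * |τ| := by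
  rw [ctrlEvolExt_eq_controlled, ctrlEvolExt_eq_controlled, ← map_sub]
  refine (NonUnitalStarAlgHom.norm_apply_le _ _).trans <|
    (pi_norm_le_iff_of_nonneg (by positivity)).mpr fun c => ?_
  fin_cases c
  · simp; positivity
  · refine (norm_exp_sub_exp_le_of_mem_skewAdjoint
      (hH₁.isSelfAdjoint.neg_I_mul_smul_mem_skewAdjoint τ)
      (hH₂.isSelfAdjoint.neg_I_mul_smul_mem_skewAdjoint τ)).trans_eq ?_
    rw [← smul_sub, norm_smul]
    simp [mul_comm]

variable {D : ℕ} {t : Fin D → ℝ}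
  {U : Fin (D + 1) → Matrix (Fin 2 × (Fin n → Fin 2) × A) (Fin 2 × (Fin n → Fin 2) × A) ℂ}

lemma runCircuit_eq_mul_prod (H : Matrix (Fin n → Fin 2) (Fin n → Fin 2) ℂ) :
    runCircuit n H D t U = U (Fin.last D) *
      ((List.finRange D).reverse.map fun i => ctrlEvolExt n H (t i) A * U i.castSucc).prod := by
  rw [runCircuit, List.ofFn_eq_map, List.map_reverse]

lemma runCircuit_mem_unitaryGroup {H : Matrix (Fin n → Fin 2) (Fin n → Fin 2) ℂ}
    (hH : H.IsHermitian) (hU : ∀ i, U i ∈ Matrix.unitaryGroup _ ℂ) :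
    runCircuit n H D t U ∈ Matrix.unitaryGroup _ ℂ := by
  rw [runCircuit_eq_mul_prod]
  refine mul_mem (hU _) (list_prod_mem ?_)
  simpa using fun i => mul_mem (ctrlEvolExt_mem_unitaryGroup hH (t i)) (hU _)

lemma norm_toLp_runCircuit_mulVec {H : Matrix (Fin n → Fin 2) (Fin n → Fin 2) ℂ}
    (hH : H.IsHermitian) (hU : ∀ i, U i ∈ Matrix.unitaryGroup _ ℂ)
    (ψ : Fin 2 × (Fin n → Fin 2) × A → ℂ) :
    ‖WithLp.toLp 2 (runCircuit n H D t U *ᵥ ψ)‖ = ‖WithLp.toLp 2 ψ‖ := by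
  rw [← Matrix.toEuclideanCLM_toLp, ContinuousLinearMap.norm_map_of_mem_unitary
    (Unitary.map_mem _ (runCircuit_mem_unitaryGroup hH hU))]

lemma norm_runCircuit_sub_le {H₁ H₂ : Matrix (Fin n → Fin 2) (Fin n → Fin 2) ℂ}
    (hH₁ : H₁.IsHermitian) (hH₂ : H₂.IsHermitian) (hU : ∀ i, U i ∈ Matrix.unitaryGroup _ ℂ) :
    ‖runCircuit n H₁ D t U - runCircuit n H₂ D t U‖ ≤ ‖H₁ - H₂‖ * ∑ i, |t i| := by
  rw [runCircuit_eq_mul_prod, runCircuit_eq_mul_prod, ← mul_sub,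
    CStarRing.norm_mem_unitary_mul _ (hU _)]
  refine (norm_list_prod_map_sub_le_of_mem_unitary
    (f := fun i => ctrlEvolExt n H₁ (t i) A * U i.castSucc)
    (g := fun i => ctrlEvolExt n H₂ (t i) A * U i.castSucc)
    (fun i => mul_mem (ctrlEvolExt_mem_unitaryGroup hH₁ (t i)) (hU _))
    (fun i => mul_mem (ctrlEvolExt_mem_unitaryGroup hH₂ (t i)) (hU _)) _).trans ?_
  rw [List.map_reverse, List.sum_reverse, ← Fin.sum_univ_def, Finset.mul_sum]
  refine Finset.sum_le_sum fun i _ => ?_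
  rw [← sub_mul, CStarRing.norm_mul_mem_unitary _ (hU _)]
  exact norm_ctrlEvolExt_sub_le hH₁ hH₂ (t i)

end Circuit

open scoped Matrix.Norms.L2Operator in
/-- For any single-round experiment interleaving `D` queries to the controlled time
evolution of `H` with arbitrary unitaries on an extended system, followed by a POVM
measurement, the total variation distance between the output distributions under `H₁`
and `H₂` is at most `min(2‖H₁ − H₂‖ ∑_d |t_d|, 1)`. -/
theorem stmt18 (n : ℕ) (H₁ H₂ : Matrix (Fin n → Fin 2) (Fin n → Fin 2) ℂ)
    (hH₁ : H₁.IsHermitian) (hH₂ : H₂.IsHermitian)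
    {A : Type*} [Fintype A] [DecidableEq A]
    (D : ℕ) (t : Fin D → ℝ)
    (U : Fin (D + 1) → Matrix (Fin 2 × (Fin n → Fin 2) × A)
      (Fin 2 × (Fin n → Fin 2) × A) ℂ)
    (hU : ∀ i, U i ∈ Matrix.unitaryGroup (Fin 2 × (Fin n → Fin 2) × A) ℂ)
    (ψ₀ : Fin 2 × (Fin n → Fin 2) × A → ℂ)
    (hψ₀ : ∑ x, Complex.normSq (ψ₀ x) = 1)
    {O : Type*} [Fintype O]
    (M : O → Matrix (Fin 2 × (Fin n → Fin 2) × A) (Fin 2 × (Fin n → Fin 2) × A) ℂ)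
    (hMpos : ∀ o, (M o).PosSemidef) (hMsum : ∑ o, M o = 1)
    (p₁ p₂ : O → ℝ)
    (hp₁ : ∀ o, p₁ o =
      (dotProduct (star ((runCircuit n H₁ D t U).mulVec ψ₀))
        ((M o).mulVec ((runCircuit n H₁ D t U).mulVec ψ₀))).re)
    (hp₂ : ∀ o, p₂ o =
      (dotProduct (star ((runCircuit n H₂ D t U).mulVec ψ₀))
        ((M o).mulVec ((runCircuit n H₂ D t U).mulVec ψ₀))).re) :
    (1 / 2) * ∑ o, |p₁ o - p₂ o| ≤
      min (2 * ‖Matrix.toEuclideanCLM (𝕜 := ℂ) (H₁ - H₂)‖ * ∑ i, |t i|) 1 := by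
  set ψ₁ := runCircuit n H₁ D t U *ᵥ ψ₀
  set ψ₂ := runCircuit n H₂ D t U *ᵥ ψ₀
  have hψ₀ : ‖WithLp.toLp 2 ψ₀‖ = 1 := by
    rw [← pow_eq_one_iff_of_nonneg (norm_nonneg _) two_ne_zero, EuclideanSpace.norm_sq_eq, ← hψ₀]
    simp [Complex.sq_norm]
  have hψ₁ : ‖WithLp.toLp 2 ψ₁‖ = 1 := (norm_toLp_runCircuit_mulVec hH₁ hU ψ₀).trans hψ₀
  have hψ₂ : ‖WithLp.toLp 2 ψ₂‖ = 1 := (norm_toLp_runCircuit_mulVec hH₂ hU ψ₀).trans hψ₀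
  have hdist : ‖WithLp.toLp 2 (ψ₁ - ψ₂)‖ ≤ ‖H₁ - H₂‖ * ∑ i, |t i| := by
    rw [← Matrix.sub_mulVec, ← Matrix.toEuclideanCLM_toLp]
    refine (ContinuousLinearMap.le_opNorm _ _).trans ?_
    rw [hψ₀, mul_one]
    exact norm_runCircuit_sub_le hH₁ hH₂ hU
  have htv : ∑ o, |p₁ o - p₂ o| ≤ ‖WithLp.toLp 2 (ψ₁ - ψ₂)‖ * 2 := by
    simpa [hp₁, hp₂, hψ₁, hψ₂, one_add_one_eq_two] using
      Matrix.sum_abs_re_star_dotProduct_mulVec_sub_le hMpos hMsum ψ₁ ψ₂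
  have htv_le_two : ∑ o, |p₁ o - p₂ o| ≤ 2 := by
    simpa [hp₁, hp₂, hψ₁, hψ₂, one_add_one_eq_two] using
      Matrix.sum_abs_re_star_dotProduct_mulVec_sub_le_add hMpos hMsum ψ₁ ψ₂
  rw [← Matrix.cstar_norm_def]
  refine le_min ?_ (by linarith)
  have : 0 ≤ ‖H₁ - H₂‖ * ∑ i, |t i| := by positivity
  linarith
end

section
/- Let H_1 = Σ_{α∈S} (ε_1/m^{1/p}) P_α and H_2 = Σ_{α∈S} (ε_2/m^{1/p}) P_α, where S is a set of m mutually anticommuting non-identity n-qubit Pauli matrices and ε_2 > ε_1 ≥ 0. Then the operator norm of the difference satisfies ||H_1 − H_2|| = (ε_2 − ε_1)/m^{1/p − 1/2}, while the Pauli p-norm satisfies ||H_1 − H_2||_{Pauli,p} = ε_2 − ε_1. -/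
/-! With `d = (ε₂ - ε₁) / m^{1/p}` and `A = ∑_{α ∈ S} P_α`, the difference is `H₁ - H₂ = -d • A`.
Each `P_α` is a Hermitian involution and distinct elements of `S` anticommute, so `A` is Hermitian
with `A² = m • 1`; the C*-identity `‖A‖² = ‖A* A‖` then gives `‖A‖ = √m`, i.e.
`‖H₁ - H₂‖ = d √m`. Since `Tr (P_α P_β) = 2ⁿ δ_{αβ}`, the Pauli coefficients of `H₁ - H₂` are `-d`
on `S` and `0` elsewhere, so their `ℓ_p`-norm is `m^{1/p} d = ε₂ - ε₁`. -/

open scoped BigOperators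

attribute [local instance] Classical.propDecidable

open scoped Matrix

theorem Finset.sum_mul_sum_self_of_anticommute {ι R : Type*} [Ring R] [DecidableEq ι]
    (s : Finset ι) (f : ι → R) (hsq : ∀ a ∈ s, f a * f a = 1)
    (hanti : ∀ a ∈ s, ∀ b ∈ s, a ≠ b → f a * f b = -(f b * f a)) :
    (∑ a ∈ s, f a) * (∑ a ∈ s, f a) = s.card := by
  -- Cancelling `(a, b)` against `(b, a)` needs no division by `2`, so any ring will do.
  have hoff : ∑ x ∈ s.offDiag, f x.1 * f x.2 = 0 := by
    refine Finset.sum_involution (fun x _ => x.swap) (fun x hx => ?_) (fun x hx _ => ?_)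
      (fun x hx => ?_) (fun x _ => x.swap_swap) <;>
    obtain ⟨ha, hb, hab⟩ := Finset.mem_offDiag.mp hx
    · simp [hanti _ ha _ hb hab]
    · exact fun h => hab (congrArg Prod.fst h).symm
    · exact Finset.mem_offDiag.mpr ⟨hb, ha, Ne.symm hab⟩
  rw [Finset.sum_mul_sum, ← Finset.sum_product', ← Finset.diag_union_offDiag,
    Finset.sum_union (Finset.disjoint_diag_offDiag s), Finset.sum_diag, hoff, add_zero,
    Finset.sum_congr rfl hsq, Finset.sum_const, nsmul_one]

namespace Matrix

variable {ι κ R : Type*} [Fintype ι] [CommSemiring R]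

def piKron (A : ι → Matrix κ κ R) : Matrix (ι → κ) (ι → κ) R :=
  of fun x y => ∏ i, A i (x i) (y i)

theorem piKron_mul [DecidableEq ι] [Fintype κ] (A B : ι → Matrix κ κ R) :
    piKron A * piKron B = piKron fun i => A i * B i := by
  ext x y
  simp only [piKron, mul_apply, of_apply, ← Finset.prod_mul_distrib]
  exact (Fintype.prod_sum fun i k => A i (x i) k * B i k (y i)).symm

theorem piKron_one [DecidableEq ι] [DecidableEq κ] :
    piKron (fun _ => (1 : Matrix κ κ R)) = (1 : Matrix (ι → κ) (ι → κ) R) := by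
  ext x y
  by_cases h : x = y
  · simp [piKron, one_apply, h]
  · obtain ⟨i, hi⟩ := Function.ne_iff.mp h
    simpa [piKron, one_apply, h] using Finset.prod_eq_zero (Finset.mem_univ i) (by simp [hi])

theorem trace_piKron [DecidableEq ι] [Fintype κ] (A : ι → Matrix κ κ R) :
    (piKron A).trace = ∏ i, (A i).trace := by
  simp only [trace, diag, piKron, of_apply]
  exact (Fintype.prod_sum fun i k => A i k k).symm

theorem conjTranspose_piKron [StarRing R] (A : ι → Matrix κ κ R) :
    (piKron A)ᴴ = piKron fun i => (A i)ᴴ := by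
  ext x y
  simp [piKron, star_prod]

end Matrix

theorem pauliOne_mul_self (σ : Fin 4) : pauliOne σ * pauliOne σ = 1 := by
  fin_cases σ <;>
    · ext i j
      fin_cases i <;> fin_cases j <;>
        simp [pauliOne, Matrix.mul_apply, Fin.sum_univ_two, Matrix.one_apply]

theorem trace_pauliOne_mul (σ τ : Fin 4) :
    (pauliOne σ * pauliOne τ).trace = if σ = τ then 2 else 0 := by
  fin_cases σ <;> fin_cases τ <;>
    simp [pauliOne, Matrix.trace, Fin.sum_univ_two] <;> norm_num

theorem pauliOne_isHermitian (σ : Fin 4) : (pauliOne σ).IsHermitian := by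
  fin_cases σ <;>
    · ext i j
      fin_cases i <;> fin_cases j <;> simp [pauliOne]

theorem Pauli_eq_piKron (n : ℕ) (α : Fin n → Fin 4) :
    Pauli n α = Matrix.piKron fun i => pauliOne (α i) := rfl

theorem Pauli_mul_self (n : ℕ) (α : Fin n → Fin 4) : Pauli n α * Pauli n α = 1 := by
  simp only [Pauli_eq_piKron, Matrix.piKron_mul, pauliOne_mul_self, Matrix.piKron_one]

theorem Pauli_isHermitian (n : ℕ) (α : Fin n → Fin 4) : (Pauli n α).IsHermitian := by
  simp only [Matrix.IsHermitian, Pauli_eq_piKron, Matrix.conjTranspose_piKron,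
    fun i => (pauliOne_isHermitian (α i)).eq]

theorem trace_Pauli_mul (n : ℕ) (α β : Fin n → Fin 4) :
    (Pauli n α * Pauli n β).trace = if α = β then 2 ^ n else 0 := by
  simp only [Pauli_eq_piKron, Matrix.piKron_mul, Matrix.trace_piKron, trace_pauliOne_mul,
    Fintype.prod_ite_zero, funext_iff, Finset.prod_const, Finset.card_univ, Fintype.card_fin]

theorem Matrix.norm_toEuclideanCLM_of_conjTranspose_mul_self {𝕜 ι : Type*} [RCLike 𝕜]
    [Fintype ι] [DecidableEq ι] [Nonempty ι] (M : Matrix ι ι 𝕜) {c : ℝ} (hc : 0 ≤ c)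
    (hM : Mᴴ * M = (c : 𝕜) • 1) :
    ‖toEuclideanCLM (n := ι) (𝕜 := 𝕜) M‖ = √c := by
  have hstar : star (toEuclideanCLM (n := ι) (𝕜 := 𝕜) M) * toEuclideanCLM (n := ι) (𝕜 := 𝕜) M =
      (c : 𝕜) • 1 := by
    rw [← map_star, ← map_mul, star_eq_conjTranspose, hM, map_smul, map_one]
  rw [← Real.sqrt_mul_self (norm_nonneg _), ← CStarRing.norm_star_mul_self, hstar, norm_smul,
    norm_one, mul_one, RCLike.norm_ofReal, abs_of_nonneg hc]

theorem norm_toEuclideanCLM_sum_Pauli (n : ℕ) (S : Finset (Fin n → Fin 4))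
    (hanti : ∀ α ∈ S, ∀ β ∈ S, α ≠ β → Pauli n α * Pauli n β = -(Pauli n β * Pauli n α)) :
    ‖Matrix.toEuclideanCLM (𝕜 := ℂ) (∑ α ∈ S, Pauli n α)‖ = √S.card := by
  refine Matrix.norm_toEuclideanCLM_of_conjTranspose_mul_self _ (Nat.cast_nonneg _) ?_
  rw [Matrix.conjTranspose_sum, Finset.sum_congr rfl fun α _ => (Pauli_isHermitian n α).eq,
    Finset.sum_mul_sum_self_of_anticommute S _ (fun α _ => Pauli_mul_self n α) hanti]
  simp [Nat.cast_smul_eq_nsmul]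

theorem trace_sum_smul_Pauli_mul_div (n : ℕ) (S : Finset (Fin n → Fin 4))
    (c : (Fin n → Fin 4) → ℂ) (β : Fin n → Fin 4) :
    ((∑ α ∈ S, c α • Pauli n α) * Pauli n β).trace / 2 ^ n = if β ∈ S then c β else 0 := by
  simp only [Finset.sum_mul, Matrix.smul_mul, Matrix.trace_sum, Matrix.trace_smul,
    trace_Pauli_mul, smul_ite, smul_zero, Finset.sum_ite_eq']
  split_ifs <;> simp

theorem stmt19_general (n m : ℕ) (hm : 0 < m)
    (S : Finset (Fin n → Fin 4)) (hScard : S.card = m)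
    (hanti : ∀ α ∈ S, ∀ β ∈ S, α ≠ β →
        Pauli n α * Pauli n β = -(Pauli n β * Pauli n α))
    (p : ℝ) (hp : 1 ≤ p)
    (ε₁ ε₂ : ℝ) (hε : ε₁ < ε₂)
    (H₁ H₂ : Matrix (Fin n → Fin 2) (Fin n → Fin 2) ℂ)
    (hH₁ : H₁ = ∑ α ∈ S, ((ε₁ / (m : ℝ) ^ (1 / p) : ℝ) : ℂ) • Pauli n α)
    (hH₂ : H₂ = ∑ α ∈ S, ((ε₂ / (m : ℝ) ^ (1 / p) : ℝ) : ℂ) • Pauli n α) :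
    ‖Matrix.toEuclideanCLM (𝕜 := ℂ) (H₁ - H₂)‖
        = (ε₂ - ε₁) / (m : ℝ) ^ (1 / p - 1 / 2) ∧
    (∑ α : Fin n → Fin 4,
        ‖((H₁ - H₂) * Pauli n α).trace / 2 ^ n‖ ^ p) ^ (1 / p)
      = ε₂ - ε₁ := by
  have hm₀ : (0 : ℝ) < m := Nat.cast_pos.mpr hm
  have hp₀ : p ≠ 0 := (zero_lt_one.trans_le hp).ne'
  set d := (ε₂ - ε₁) / (m : ℝ) ^ (1 / p) with hd
  have hd₀ : 0 ≤ d := div_nonneg (sub_nonneg.2 hε.le) (Real.rpow_nonneg hm₀.le _)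
  have hdiff : H₁ - H₂ = ∑ α ∈ S, ((-d : ℝ) : ℂ) • Pauli n α := by
    rw [hH₁, hH₂, ← Finset.sum_sub_distrib]
    refine Finset.sum_congr rfl fun α _ => ?_
    rw [← sub_smul, hd]
    congr 1
    push_cast
    ring
  have hcoeff (α : Fin n → Fin 4) :
      ‖((H₁ - H₂) * Pauli n α).trace / 2 ^ n‖ ^ p = if α ∈ S then d ^ p else 0 := by
    rw [hdiff, trace_sum_smul_Pauli_mul_div]
    split_ifs
    · rw [Complex.norm_real, norm_neg, Real.norm_of_nonneg hd₀]
    · rw [norm_zero, Real.zero_rpow hp₀]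
  constructor
  · rw [hdiff, ← Finset.smul_sum, map_smul, norm_smul, norm_toEuclideanCLM_sum_Pauli n S hanti,
      hScard, Complex.norm_real, norm_neg, Real.norm_of_nonneg hd₀, hd, Real.sqrt_eq_rpow,
      Real.rpow_sub hm₀, div_div_eq_mul_div, mul_div_right_comm]
  · rw [Finset.sum_congr rfl fun α _ => hcoeff α, Finset.sum_ite_mem, Finset.univ_inter,
      Finset.sum_const, hScard, nsmul_eq_mul, Real.mul_rpow hm₀.le (by positivity),
      one_div, Real.rpow_rpow_inv hd₀ hp₀, hd, one_div, mul_div_cancel₀ _ (by positivity)]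

/-- For `H₁ = ∑_{α∈S} (ε₁/m^{1/p}) P_α` and `H₂ = ∑_{α∈S} (ε₂/m^{1/p}) P_α`, with `S` a
set of `m` mutually anticommuting non-identity Pauli matrices and `ε₂ > ε₁ ≥ 0`:
the operator norm satisfies `‖H₁ − H₂‖ = (ε₂ − ε₁)/m^{1/p − 1/2}`, while the Pauli
`p`-norm (the `ℓ_p`-norm of the Pauli coefficient vector, with coefficients
`Tr((H₁−H₂)P_α)/2^n`) equals `ε₂ − ε₁`. -/
theorem stmt19 (n m : ℕ) (hm : 0 < m)
    (S : Finset (Fin n → Fin 4)) (hScard : S.card = m)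
    (hSid : (fun _ => (0 : Fin 4)) ∉ S)
    (hanti : ∀ α ∈ S, ∀ β ∈ S, α ≠ β →
        Pauli n α * Pauli n β = -(Pauli n β * Pauli n α))
    (p : ℝ) (hp : 1 ≤ p)
    (ε₁ ε₂ : ℝ) (hε₁ : 0 ≤ ε₁) (hε : ε₁ < ε₂)
    (H₁ H₂ : Matrix (Fin n → Fin 2) (Fin n → Fin 2) ℂ)
    (hH₁ : H₁ = ∑ α ∈ S, ((ε₁ / (m : ℝ) ^ (1 / p) : ℝ) : ℂ) • Pauli n α)
    (hH₂ : H₂ = ∑ α ∈ S, ((ε₂ / (m : ℝ) ^ (1 / p) : ℝ) : ℂ) • Pauli n α) :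
    ‖Matrix.toEuclideanCLM (𝕜 := ℂ) (H₁ - H₂)‖
        = (ε₂ - ε₁) / (m : ℝ) ^ (1 / p - 1 / 2) ∧
    (∑ α : Fin n → Fin 4,
        ‖((H₁ - H₂) * Pauli n α).trace / 2 ^ n‖ ^ p) ^ (1 / p)
      = ε₂ - ε₁ :=
  stmt19_general n m hm S hScard hanti p hp ε₁ ε₂ hε H₁ H₂ hH₁ hH₂
end
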